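/- arXiv:2510.21020 — 4 statements merged into one kernel-verified Lean document; each statement's English description precedes it below -/
import Mathlib

section
/- Let {a_t} be a real sequence with a_0 = a > 0 and a_{t+1} = a_t + c·a_t^{k-1} for all t ≥ 0, where c > 0 and k ≥ 3 is an integer. Then for all t with 0 ≤ t < 1/(c(k-2)a^{k-2}), we have a_t ≤ a / (1 - (k-2)·c·a^{k-2}·t)^{1/(k-2)}. -/
/-!
Writing `s (t + 1) = s t * (1 + y)` with `y = c * s t ^ m`, Bernoulli's inequality for
`1 / (1 + y) = 1 - y / (1 + y)` gives `(1 + y) ^ (-m) ≥ 1 - m * y`, that is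
`s (t + 1) ^ (-m) ≥ s t ^ (-m) - m * c`. Summing, `s t ^ (-m) ≥ a ^ (-m) - m * c * t`, and taking
`m`-th roots with `m = k - 2` gives the bound.
-/

lemma one_sub_mul_le_inv_one_add_pow {y : ℝ} (hy : 0 ≤ y) (n : ℕ) :
    1 - n * y ≤ ((1 + y) ^ n)⁻¹ := by
  have hinv : (1 + y)⁻¹ = 1 + -(y / (1 + y)) := by field_simp; ring
  have hfrac : y / (1 + y) ≤ 1 := (div_le_one (by positivity)).2 (by linarith)
  calc 1 - n * y ≤ 1 + n * -(y / (1 + y)) := by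
        have : y / (1 + y) ≤ y := div_le_self hy (by linarith)
        nlinarith [(n.cast_nonneg : (0 : ℝ) ≤ n)]
    _ ≤ (1 + -(y / (1 + y))) ^ n := one_add_mul_le_pow (by linarith) n
    _ = ((1 + y) ^ n)⁻¹ := by rw [← hinv, inv_pow]

lemma inv_pow_sub_le_inv_pow_add_mul_pow_succ {x c : ℝ} (hx : 0 < x) (hc : 0 ≤ c) (m : ℕ) :
    (x ^ m)⁻¹ - m * c ≤ ((x + c * x ^ (m + 1)) ^ m)⁻¹ := by
  have hxm : 0 < x ^ m := pow_pos hx m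
  have hstep : x + c * x ^ (m + 1) = x * (1 + c * x ^ m) := by ring
  calc (x ^ m)⁻¹ - m * c = (x ^ m)⁻¹ * (1 - m * (c * x ^ m)) := by field_simp
    _ ≤ (x ^ m)⁻¹ * ((1 + c * x ^ m) ^ m)⁻¹ := by
        gcongr
        exact one_sub_mul_le_inv_one_add_pow (by positivity) m
    _ = ((x + c * x ^ (m + 1)) ^ m)⁻¹ := by rw [hstep, mul_pow, mul_inv]

section Recurrence

variable {s : ℕ → ℝ} {a c : ℝ} {m : ℕ}

lemma pos_of_add_mul_pow (ha : 0 < a) (hc : 0 ≤ c) (h0 : s 0 = a)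
    (hrec : ∀ t, s (t + 1) = s t + c * s t ^ (m + 1)) (t : ℕ) : 0 < s t := by
  induction t with
  | zero => rwa [h0]
  | succ n ih => rw [hrec]; positivity

lemma inv_pow_sub_mul_le_inv_pow (ha : 0 < a) (hc : 0 ≤ c) (h0 : s 0 = a)
    (hrec : ∀ t, s (t + 1) = s t + c * s t ^ (m + 1)) (t : ℕ) :
    (a ^ m)⁻¹ - m * c * t ≤ (s t ^ m)⁻¹ := by
  induction t with
  | zero => simp [h0]
  | succ n ih =>
    have hstep := inv_pow_sub_le_inv_pow_add_mul_pow_succ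
      (pos_of_add_mul_pow ha hc h0 hrec n) hc m
    rw [hrec]
    push_cast
    linarith

lemma le_div_rpow_of_add_mul_pow (ha : 0 < a) (hc : 0 ≤ c) (h0 : s 0 = a)
    (hrec : ∀ t, s (t + 1) = s t + c * s t ^ (m + 1)) (hm : m ≠ 0) {t : ℕ}
    (ht : m * c * a ^ m * t < 1) :
    s t ≤ a / (1 - m * c * a ^ m * t) ^ ((m : ℝ)⁻¹) := by
  have hst := pos_of_add_mul_pow ha hc h0 hrec t
  have hD : 0 < 1 - m * c * a ^ m * t := by linarith
  have hpow : s t ^ m ≤ a ^ m / (1 - m * c * a ^ m * t) := by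
    have hinv := inv_pow_sub_mul_le_inv_pow ha hc h0 hrec t
    have hlhs : (a ^ m)⁻¹ - m * c * t = (1 - m * c * a ^ m * t) / a ^ m := by field_simp
    rw [hlhs, div_le_iff₀ (by positivity), inv_mul_eq_div, le_div_iff₀ (by positivity)] at hinv
    rw [le_div_iff₀ hD]
    linarith
  calc s t = (s t ^ m) ^ ((m : ℝ)⁻¹) := (Real.pow_rpow_inv_natCast hst.le hm).symm
    _ ≤ (a ^ m / (1 - m * c * a ^ m * t)) ^ ((m : ℝ)⁻¹) :=
        Real.rpow_le_rpow (by positivity) hpow (by positivity)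
    _ = a / (1 - m * c * a ^ m * t) ^ ((m : ℝ)⁻¹) := by
        rw [Real.div_rpow (by positivity) hD.le, Real.pow_rpow_inv_natCast ha.le hm]

end Recurrence

/-- Upper bound of the discrete Bihari–LaSalle inequality for the exact
recurrence `a_{t+1} = a_t + c a_t^{k-1}`. -/
theorem stmt_1 (s : ℕ → ℝ) (a c : ℝ) (k : ℕ) (ha : 0 < a) (hc : 0 < c) (hk : 3 ≤ k)
    (h0 : s 0 = a) (hrec : ∀ t : ℕ, s (t + 1) = s t + c * (s t) ^ (k - 1)) :
    ∀ t : ℕ, (t : ℝ) < 1 / (c * (k - 2) * a ^ (k - 2)) →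
      s t ≤ a / (1 - (k - 2) * c * a ^ (k - 2) * t) ^ ((1 : ℝ) / (k - 2)) := by
  intro t ht
  have hm : ((k - 2 : ℕ) : ℝ) = (k : ℝ) - 2 := by push_cast [Nat.cast_sub (by omega : 2 ≤ k)]; ring
  have hrec' : ∀ t, s (t + 1) = s t + c * s t ^ (k - 2 + 1) := by
    intro t; rw [hrec, show k - 1 = k - 2 + 1 by omega]
  have hpos : 0 < (k - 2 : ℝ) := by rw [← hm]; exact_mod_cast (by omega : 0 < k - 2)
  rw [lt_div_iff₀ (by positivity)] at ht
  rw [one_div, ← hm]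
  exact le_div_rpow_of_add_mul_pow ha hc.le h0 hrec' (by omega) (by rw [hm]; linarith)
end

section
/- Let {a_t} be a real sequence with a_0 = a > 0 and a_{t+1} = a_t + c·a_t^{k-1} for all t ≥ 0, where c > 0 and k ≥ 3 is an integer. Then for all t with 0 ≤ t < (a^{-(k-2)} - c)/(c(k-2)) (assuming a^{-(k-2)} > c), we have a_t ≥ a / (1 - (c/2)·a^{k-2}·t)^{1/(k-2)}. -/
/-!
Put `m = k - 2` and `b_t = s_t ^ (-m)`. The recurrence reads `s_{t+1} = s_t (1 + c s_t ^ m)`, so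
`b_{t+1} = b_t (1 + c s_t ^ m) ^ (-m)`. Two Bernoulli-type estimates for `(1 + y) ^ m` with
`y = c s_t ^ m = c / b_t` bound the decrement `b_t - b_{t+1}`: it is at most `m c` always, and at
least `c / 2` as long as `b_t ≥ c`. The first estimate gives `b_t ≥ b_0 - m c t`, which keeps
`b_t ≥ c` throughout the range of `t` in the statement, so the second one gives
`b_t ≤ b_0 - c t / 2`; taking `m`-th roots yields the lower bound on `s_t`.
-/

lemma one_add_pow_mul_one_sub_mul_le_one {y : ℝ} (hy : 0 ≤ y) (m : ℕ) :
    (1 + y) ^ m * (1 - m * y) ≤ 1 := by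
  induction m with
  | zero => simp
  | succ n ih =>
    have hpow : (0 : ℝ) ≤ (1 + y) ^ n := by positivity
    rw [pow_succ]
    push_cast at ih ⊢
    nlinarith [mul_nonneg hpow (mul_nonneg (by positivity : (0 : ℝ) ≤ n + 1) (sq_nonneg y)),
      mul_nonneg hpow hy]

lemma one_le_one_add_pow_mul_one_sub_half {y : ℝ} (hy₀ : 0 ≤ y) (hy₁ : y ≤ 1) {m : ℕ}
    (hm : 1 ≤ m) : 1 ≤ (1 + y) ^ m * (1 - y / 2) := by
  have : 1 + y ≤ (1 + y) ^ m := le_self_pow₀ (by linarith) (by omega)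
  nlinarith [sq_nonneg y]

lemma inv_sub_le_inv_mul_one_add_pow {x c : ℝ} (hx : 0 < x) (hc : 0 ≤ c) (m : ℕ) :
    x⁻¹ - m * c ≤ (x * (1 + c * x) ^ m)⁻¹ := by
  have hP : 0 < (1 + c * x) ^ m := by positivity
  rw [inv_eq_one_div (x * _), le_div_iff₀ (by positivity)]
  calc (x⁻¹ - m * c) * (x * (1 + c * x) ^ m)
      = (1 + c * x) ^ m * (1 - m * (c * x)) := by field_simp
    _ ≤ 1 := one_add_pow_mul_one_sub_mul_le_one (by positivity) m

lemma inv_mul_one_add_pow_le_inv_sub_half {x c : ℝ} (hx : 0 < x) (hc : 0 ≤ c) (hcx : c * x ≤ 1)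
    {m : ℕ} (hm : 1 ≤ m) : (x * (1 + c * x) ^ m)⁻¹ ≤ x⁻¹ - c / 2 := by
  rw [inv_le_iff_one_le_mul₀ (by positivity)]
  calc 1 ≤ (1 + c * x) ^ m * (1 - c * x / 2) :=
        one_le_one_add_pow_mul_one_sub_half (by positivity) hcx hm
    _ = (x⁻¹ - c / 2) * (x * (1 + c * x) ^ m) := by field_simp

section PowerRecurrence

variable {x : ℕ → ℝ} {c : ℝ} {m : ℕ}

lemma pos_of_eq_mul_one_add_pow (hx₀ : 0 < x 0) (hc : 0 ≤ c)
    (hrec : ∀ t, x (t + 1) = x t * (1 + c * x t) ^ m) (t : ℕ) : 0 < x t := by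
  induction t with
  | zero => exact hx₀
  | succ n ih => rw [hrec]; positivity

lemma inv_sub_le_inv_of_eq_mul_one_add_pow (hx₀ : 0 < x 0) (hc : 0 ≤ c)
    (hrec : ∀ t, x (t + 1) = x t * (1 + c * x t) ^ m) (t : ℕ) :
    (x 0)⁻¹ - m * c * t ≤ (x t)⁻¹ := by
  induction t with
  | zero => simp
  | succ n ih =>
    have hstep := inv_sub_le_inv_mul_one_add_pow (pos_of_eq_mul_one_add_pow hx₀ hc hrec n) hc m
    rw [hrec]
    push_cast
    linarith

lemma inv_le_inv_sub_of_eq_mul_one_add_pow (hx₀ : 0 < x 0) (hc : 0 ≤ c) (hm : 1 ≤ m)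
    (hrec : ∀ t, x (t + 1) = x t * (1 + c * x t) ^ m) (t : ℕ)
    (ht : m * c * t ≤ (x 0)⁻¹ - c) : (x t)⁻¹ ≤ (x 0)⁻¹ - c / 2 * t := by
  induction t with
  | zero => simp
  | succ n ih =>
    have hmc : 0 ≤ (m : ℝ) * c := by positivity
    push_cast at ht ⊢
    have hn : m * c * n ≤ (x 0)⁻¹ - c := by nlinarith
    have hxn := pos_of_eq_mul_one_add_pow hx₀ hc hrec n
    have hcx : c * x n ≤ 1 := by
      have := inv_sub_le_inv_of_eq_mul_one_add_pow hx₀ hc hrec n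
      have hc_le : c ≤ (x n)⁻¹ := by linarith
      calc c * x n ≤ (x n)⁻¹ * x n := by gcongr
        _ = 1 := inv_mul_cancel₀ hxn.ne'
    have hstep := inv_mul_one_add_pow_le_inv_sub_half hxn hc hcx hm
    rw [hrec]
    linarith [ih hn]

end PowerRecurrence

lemma div_rpow_inv_le_of_inv_pow_le {s a E : ℝ} {m : ℕ} (hs : 0 < s) (ha : 0 < a) (hm : m ≠ 0)
    (h : (s ^ m)⁻¹ ≤ E / a ^ m) : a / E ^ ((1 : ℝ) / m) ≤ s := by
  have hE : 0 < E :=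
    (div_pos_iff_of_pos_right (by positivity)).mp ((inv_pos.mpr (pow_pos hs m)).trans_le h)
  have hpow : a ^ m / E ≤ s ^ m := by
    rw [← inv_div]
    exact (inv_le_comm₀ (by positivity) (by positivity)).mp h
  calc a / E ^ ((1 : ℝ) / m) = (a ^ m / E) ^ ((1 : ℝ) / m) := by
        rw [Real.div_rpow (by positivity) hE.le, one_div, Real.pow_rpow_inv_natCast ha.le hm]
    _ ≤ (s ^ m) ^ ((1 : ℝ) / m) := Real.rpow_le_rpow (by positivity) hpow (by positivity)
    _ = s := by rw [one_div, Real.pow_rpow_inv_natCast hs.le hm]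

theorem stmt_2_general (s : ℕ → ℝ) (a c : ℝ) (k : ℕ) (ha : 0 < a) (hc : 0 < c) (hk : 3 ≤ k)
    (h0 : s 0 = a) (hrec : ∀ t : ℕ, s (t + 1) = s t + c * (s t) ^ (k - 1)) :
    ∀ t : ℕ, (t : ℝ) < ((a ^ (k - 2))⁻¹ - c) / (c * (k - 2)) →
      s t ≥ a / (1 - (c / 2) * a ^ (k - 2) * t) ^ ((1 : ℝ) / (k - 2)) := by
  intro t ht
  set m := k - 2 with hm_def
  have hm : 1 ≤ m := by omega
  have hm_cast : (k : ℝ) - 2 = m := by rw [hm_def, Nat.cast_sub (by omega)]; norm_num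
  have hs : ∀ t, 0 < s t := fun t ↦ by
    induction t with
    | zero => rwa [h0]
    | succ n ih => rw [hrec]; positivity
  have hpow_rec : ∀ t, s (t + 1) ^ m = s t ^ m * (1 + c * s t ^ m) ^ m := fun t ↦ by
    rw [hrec, show k - 1 = m + 1 by omega, ← mul_pow]; ring
  rw [hm_cast] at ht ⊢
  have hct : m * c * t ≤ (s 0 ^ m)⁻¹ - c := by
    rw [h0]
    rw [lt_div_iff₀ (mul_pos hc (by exact_mod_cast hm))] at ht
    linarith
  have hbound := inv_le_inv_sub_of_eq_mul_one_add_pow (x := fun t ↦ s t ^ m) (pow_pos (hs 0) m)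
    hc.le hm hpow_rec t hct
  refine div_rpow_inv_le_of_inv_pow_le (hs t) ha (by omega) ?_
  calc (s t ^ m)⁻¹ ≤ (a ^ m)⁻¹ - c / 2 * t := by simpa only [h0] using hbound
    _ = (1 - c / 2 * a ^ m * t) / a ^ m := by field_simp

/-- Lower bound of the discrete Bihari–LaSalle inequality for the exact
recurrence `a_{t+1} = a_t + c a_t^{k-1}`, assuming `a^{-(k-2)} > c`. -/
theorem stmt_2 (s : ℕ → ℝ) (a c : ℝ) (k : ℕ) (ha : 0 < a) (hc : 0 < c) (hk : 3 ≤ k)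
    (hac : (a ^ (k - 2))⁻¹ > c)
    (h0 : s 0 = a) (hrec : ∀ t : ℕ, s (t + 1) = s t + c * (s t) ^ (k - 1)) :
    ∀ t : ℕ, (t : ℝ) < ((a ^ (k - 2))⁻¹ - c) / (c * (k - 2)) →
      s t ≥ a / (1 - (c / 2) * a ^ (k - 2) * t) ^ ((1 : ℝ) / (k - 2)) :=
  stmt_2_general s a c k ha hc hk h0 hrec
end

section
/- For any real numbers s and any β > 1, the standard Gaussian tail satisfies ∫_s^∞ (1/√(2π)) e^{-t²/2} dt ≥ (√(2e(β-1)) / (2β√π)) · e^{-β s²/2}. -/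
/-!
Since `e x ≤ eˣ`, we have `√(e(β-1)) t ≤ e^{(β-1)t²/2}` for every real `t` (trivially when `t < 0`),
i.e. `e^{-t²/2} ≥ √(e(β-1)) · t e^{-βt²/2}`. The right-hand side has the explicit primitive
`-e^{-βt²/2}/β`, so integrating over `(s, ∞)` gives the bound, for every `s` at once.
-/

open Real MeasureTheory Set Filter

theorem integral_Ioi_mul_exp_neg_mul_sq {b : ℝ} (hb : 0 < b) (s : ℝ) :
    ∫ t in Ioi s, t * exp (-b * t ^ 2) = exp (-b * s ^ 2) / (2 * b) := by
  have hderiv (t : ℝ) :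
      HasDerivAt (fun t => -exp (-b * t ^ 2) / (2 * b)) (t * exp (-b * t ^ 2)) t := by
    refine (((hasDerivAt_pow 2 t).const_mul (-b)).exp.neg.div_const (2 * b)).congr_deriv ?_
    field_simp
    ring
  have hlim : Tendsto (fun t : ℝ => -exp (-b * t ^ 2) / (2 * b)) atTop (nhds 0) := by
    have hexp : Tendsto (fun t : ℝ => exp (-b * t ^ 2)) atTop (nhds 0) :=
      tendsto_exp_atBot.comp ((tendsto_pow_atTop two_ne_zero).const_mul_atTop_of_neg
        (neg_lt_zero.2 hb))
    simpa using hexp.neg.div_const (2 * b)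
  rw [integral_Ioi_of_hasDerivAt_of_tendsto' (fun t _ => hderiv t)
    (integrable_mul_exp_neg_mul_sq hb).integrableOn hlim]
  ring

theorem sqrt_exp_one_mul_mul_le_exp {c : ℝ} (hc : 0 ≤ c) (t : ℝ) :
    √(exp 1 * c) * t ≤ exp (c * t ^ 2 / 2) :=
  calc √(exp 1 * c) * t ≤ √(exp 1 * c) * |t| := by gcongr; exact le_abs_self t
    _ = √(exp 1 * (c * t ^ 2)) := by
      rw [← sqrt_sq_eq_abs, ← sqrt_mul (by positivity), mul_assoc]
    _ ≤ √(exp (c * t ^ 2)) := sqrt_le_sqrt exp_one_mul_le_exp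
    _ = exp (c * t ^ 2 / 2) := (exp_half _).symm

theorem sqrt_exp_one_mul_mul_exp_le_exp_neg_sq {β : ℝ} (hβ : 1 ≤ β) (t : ℝ) :
    √(exp 1 * (β - 1)) * (t * exp (-(β / 2) * t ^ 2)) ≤ exp (-(t ^ 2) / 2) :=
  calc √(exp 1 * (β - 1)) * (t * exp (-(β / 2) * t ^ 2))
      = √(exp 1 * (β - 1)) * t * exp (-(β / 2) * t ^ 2) := by ring
    _ ≤ exp ((β - 1) * t ^ 2 / 2) * exp (-(β / 2) * t ^ 2) := by
      gcongr
      exact sqrt_exp_one_mul_mul_le_exp (by linarith) t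
    _ = exp (-(t ^ 2) / 2) := by rw [← exp_add]; ring_nf

/-- Chernoff-type lower bound on the Gaussian tail: for all `s : ℝ` and `β > 1`,
`∫_s^∞ (1/√(2π)) e^{-t²/2} dt ≥ (√(2e(β-1))/(2β√π)) e^{-β s²/2}`. -/
theorem stmt_5 (s β : ℝ) (hβ : 1 < β) :
    Real.sqrt (2 * Real.exp 1 * (β - 1)) / (2 * β * Real.sqrt Real.pi) *
        Real.exp (-(β * s ^ 2) / 2) ≤
      ∫ t in Set.Ici s, (1 / Real.sqrt (2 * Real.pi)) * Real.exp (-(t ^ 2) / 2) := by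
  have hb : 0 < β / 2 := by linarith
  have hconst : √(2 * exp 1 * (β - 1)) / (2 * β * √π) * exp (-(β * s ^ 2) / 2)
      = 1 / √(2 * π) * (√(exp 1 * (β - 1)) * (exp (-(β / 2) * s ^ 2) / (2 * (β / 2)))) := by
    rw [mul_assoc 2, sqrt_mul zero_le_two, sqrt_mul zero_le_two]
    field_simp
    rw [sq_sqrt zero_le_two]
    ring_nf
  have hgauss : Integrable fun t : ℝ => exp (-(t ^ 2) / 2) := by
    simpa [neg_div, div_eq_inv_mul] using integrable_exp_neg_mul_sq (b := 1 / 2) (by norm_num)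
  calc _ = 1 / √(2 * π) * ∫ t in Ioi s, √(exp 1 * (β - 1)) * (t * exp (-(β / 2) * t ^ 2)) := by
        rw [hconst, integral_const_mul, integral_Ioi_mul_exp_neg_mul_sq hb]
    _ ≤ 1 / √(2 * π) * ∫ t in Ioi s, exp (-(t ^ 2) / 2) := by
      refine mul_le_mul_of_nonneg_left ?_ (by positivity)
      exact setIntegral_mono ((integrable_mul_exp_neg_mul_sq hb).const_mul _).integrableOn
        hgauss.integrableOn (sqrt_exp_one_mul_mul_exp_le_exp_neg_sq hβ.le)
    _ = _ := by rw [integral_Ici_eq_integral_Ioi, integral_const_mul]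
end

section
/- Let w ∈ ℝ^d be a unit vector, g ∈ ℝ^d arbitrary with ⟨w, g⟩ = 0, γ > 0, and θ ∈ ℝ^d a unit vector with ⟨θ, w⟩ ≥ 0. Then ⟨θ, (w + γg)/‖w + γg‖⟩ ≥ ⟨θ, w⟩ + γ⟨θ, g⟩ − γ²⟨θ, w⟩‖g‖² − γ³|⟨θ, g⟩|·‖g‖². -/
/-!
Write `a = ⟪θ, w⟫`, `b = ⟪θ, g⟫`, `t = γ² ‖g‖²`. By Pythagoras `‖w + γ g‖ = √(1 + t)`, and
`1 - t ≤ 1 / (1 + t) ≤ (√(1 + t))⁻¹ ≤ 1`. Hence `a (√(1 + t))⁻¹ ≥ a (1 - t)` because `a ≥ 0`, and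
the factor `(√(1 + t))⁻¹` moves `γ b` by at most `γ |b| t`.
-/

open scoped RealInnerProductSpace

theorem Real.one_sub_le_inv_sqrt_one_add {t : ℝ} (ht : 0 ≤ t) : 1 - t ≤ (√(1 + t))⁻¹ := by
  have hsqrt : √(1 + t) ≤ 1 + t := Real.sqrt_le_left (by linarith) |>.2 (by nlinarith)
  calc 1 - t ≤ (1 + t)⁻¹ := by
        rw [← one_div, le_div_iff₀ (by linarith)]
        nlinarith
    _ ≤ (√(1 + t))⁻¹ := inv_anti₀ (Real.sqrt_pos.2 (by linarith)) hsqrt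

theorem Real.inv_sqrt_one_add_le_one {t : ℝ} (ht : 0 ≤ t) : (√(1 + t))⁻¹ ≤ 1 :=
  inv_le_one_of_one_le₀ (Real.one_le_sqrt.2 (by linarith))

theorem sub_sub_le_mul_add {a b c r t : ℝ} (ha : 0 ≤ a) (hc : 0 ≤ c) (hr : r ≤ 1)
    (hrt : 1 - t ≤ r) : a + c * b - t * a - c * t * |b| ≤ r * (a + c * b) := by
  have hshift : -(t * |b|) ≤ b * (r - 1) := by
    nlinarith [mul_nonneg (sub_nonneg.2 hr) (sub_nonneg.2 (le_abs_self b)),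
      mul_le_mul_of_nonneg_left (sub_le_comm.1 hrt) (abs_nonneg b)]
  linarith [mul_le_mul_of_nonneg_left hshift hc, mul_le_mul_of_nonneg_left hrt ha]

theorem norm_add_smul_of_inner_eq_zero {E : Type*} [NormedAddCommGroup E]
    [InnerProductSpace ℝ E] {w g : E} (hwg : ⟪w, g⟫ = 0) (γ : ℝ) :
    ‖w + γ • g‖ = √(‖w‖ ^ 2 + (γ * ‖g‖) ^ 2) := by
  have hwγg : ⟪w, γ • g⟫ = 0 := by rw [inner_smul_right, hwg, mul_zero]
  rw [← Real.sqrt_mul_self (norm_nonneg (w + γ • g)),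
    norm_add_sq_eq_norm_sq_add_norm_sq_real hwγg, norm_smul, Real.norm_eq_abs,
    mul_mul_mul_comm, abs_mul_abs_self]
  ring_nf

theorem stmt_6_general (d : ℕ) (w g θ : EuclideanSpace ℝ (Fin d)) (γ : ℝ)
    (hw : ‖w‖ = 1) (horth : ⟪w, g⟫ = 0) (hγ : 0 < γ)
    (halign : 0 ≤ ⟪θ, w⟫) :
    ⟪θ, ‖w + γ • g‖⁻¹ • (w + γ • g)⟫ ≥
      ⟪θ, w⟫ + γ * ⟪θ, g⟫ - γ ^ 2 * ⟪θ, w⟫ * ‖g‖ ^ 2 - γ ^ 3 * |⟪θ, g⟫| * ‖g‖ ^ 2 := by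
  have ht : 0 ≤ (γ * ‖g‖) ^ 2 := sq_nonneg _
  rw [inner_smul_right, inner_add_right, inner_smul_right, norm_add_smul_of_inner_eq_zero horth,
    hw, one_pow]
  have hbound := sub_sub_le_mul_add halign hγ.le (Real.inv_sqrt_one_add_le_one ht)
    (Real.one_sub_le_inv_sqrt_one_add ht) (b := ⟪θ, g⟫)
  linarith [hbound]

/-- Normalization error bound for a spherical gradient update. -/
theorem stmt_6 (d : ℕ) (w g θ : EuclideanSpace ℝ (Fin d)) (γ : ℝ)
    (hw : ‖w‖ = 1) (hθ : ‖θ‖ = 1) (horth : ⟪w, g⟫ = 0) (hγ : 0 < γ)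
    (halign : 0 ≤ ⟪θ, w⟫) :
    ⟪θ, ‖w + γ • g‖⁻¹ • (w + γ • g)⟫ ≥
      ⟪θ, w⟫ + γ * ⟪θ, g⟫ - γ ^ 2 * ⟪θ, w⟫ * ‖g‖ ^ 2 - γ ^ 3 * |⟪θ, g⟫| * ‖g‖ ^ 2 :=
  stmt_6_general d w g θ γ hw horth hγ halign
end
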